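/- Occurrence lemma: (i) if Ψ ⊢ A ≤ τ for a monotype τ, then τ does not occur inside an arrow in A; (ii) if Ψ ⊢ τ ≤ B for a monotype τ, then τ does not occur inside an arrow in B. Here 'τ occurs inside an arrow in B' means there exist B1, B2 such that B1→B2 is a subterm of B and τ is a subterm of B1 or of B2. -/

import Mathlib

set_option autoImplicit true

namespace DK

/-- Types: 1 | α | A → B | ∀α. A  (type variables named by naturals) -/
inductive Ty : Type where
  | unit : Ty
  | var : ℕ → Ty
  | arr : Ty → Ty → Ty
  | all : ℕ → Ty → Ty

/-- Monotypes: types containing no quantifiers. -/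
def Ty.mono : Ty → Prop
  | .unit => True
  | .var _ => True
  | .arr A B => A.mono ∧ B.mono
  | .all _ _ => False

/-- Free type variables. -/
def Ty.fv : Ty → Finset ℕ
  | .unit => ∅
  | .var a => {a}
  | .arr A B => A.fv ∪ B.fv
  | .all a A => A.fv.erase a

/-- `A.subst τ a` is the substitution [τ/a]A. -/
def Ty.subst : Ty → Ty → ℕ → Ty
  | .unit, _, _ => .unit
  | .var b, τ, a => if b = a then τ else .var b
  | .arr A B, τ, a => .arr (A.subst τ a) (B.subst τ a)
  | .all b A, τ, a => .all b (if b = a then A else A.subst τ a)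

/-- Declarative context entries: type variables α and term variable typings x : A. -/
inductive Decl : Type where
  | tvar : ℕ → Decl
  | var : ℕ → Ty → Decl

/-- Declarative contexts; the most recent declaration is the head
    (so "Ψ, α" is `Decl.tvar α :: Ψ`). -/
abbrev Ctx := List Decl

/-- Well-formedness Ψ ⊢ A : every free type variable of A is declared in Ψ. -/
def WfTy (Ψ : Ctx) (A : Ty) : Prop :=
  ∀ a ∈ A.fv, Decl.tvar a ∈ Ψ

/-- Declarative subtyping Ψ ⊢ A ≤ B. -/
inductive Sub : Ctx → Ty → Ty → Prop where
  | var : Decl.tvar a ∈ Ψ → Sub Ψ (.var a) (.var a)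
  | unit : Sub Ψ .unit .unit
  | arr : Sub Ψ B₁ A₁ → Sub Ψ A₂ B₂ → Sub Ψ (.arr A₁ A₂) (.arr B₁ B₂)
  | allL : (τ : Ty) → τ.mono → WfTy Ψ τ → Sub Ψ (A.subst τ a) B → Sub Ψ (.all a A) B
  | allR : Sub (Decl.tvar b :: Ψ) A B → Sub Ψ A (.all b B)

end DK

namespace DK

/-- Subterm occurrence: A ⊑ B iff A is a subterm of B. -/
inductive Subterm : Ty → Ty → Prop where
  | refl : Subterm A A
  | arrL : Subterm A B₁ → Subterm A (.arr B₁ B₂)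
  | arrR : Subterm A B₂ → Subterm A (.arr B₁ B₂)
  | all : Subterm A B → Subterm A (.all b B)

/-- τ occurs inside an arrow in B: there are B₁, B₂ with B₁→B₂ a subterm of B and
    τ a subterm of B₁ or of B₂. -/
def OccursInArrow (τ B : Ty) : Prop :=
  ∃ B₁ B₂, Subterm (.arr B₁ B₂) B ∧ (Subterm τ B₁ ∨ Subterm τ B₂)

/-! Every arrow containing `τ` has more arrows than `τ`. Subtyping against a monotype can only
lose arrows on the other side: `≤→` adds them up componentwise (with the variance flip handled by
proving both directions at once), and `≤∀L` instantiates with a monotype, which never removes an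
arrow. So `Ψ ⊢ A ≤ τ` gives `#A ≤ #τ` and `Ψ ⊢ τ ≤ B` gives `#B ≤ #τ`, leaving no room for an
arrow around `τ`. -/

def Ty.numArrows : Ty → ℕ
  | .unit => 0
  | .var _ => 0
  | .arr A B => A.numArrows + B.numArrows + 1
  | .all _ A => A.numArrows

theorem Subterm.numArrows_le {A B : Ty} (h : Subterm A B) : A.numArrows ≤ B.numArrows := by
  induction h with
  | refl => rfl
  | arrL _ ih => simp only [Ty.numArrows]; omega
  | arrR _ ih => simp only [Ty.numArrows]; omega
  | all _ ih => exact ih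

theorem Ty.numArrows_le_subst (A τ : Ty) (a : ℕ) : A.numArrows ≤ (A.subst τ a).numArrows := by
  induction A with
  | unit => rfl
  | var b => simp only [Ty.numArrows, Ty.subst]; omega
  | arr A B ihA ihB => simp only [Ty.numArrows, Ty.subst]; omega
  | all b A ih =>
    simp only [Ty.numArrows, Ty.subst]
    split_ifs
    exacts [le_rfl, ih]

theorem Sub.numArrows_le {Ψ : Ctx} {A B : Ty} (h : Sub Ψ A B) :
    (B.mono → A.numArrows ≤ B.numArrows) ∧ (A.mono → B.numArrows ≤ A.numArrows) := by
  induction h with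
  | var _ | unit => exact ⟨fun _ => le_rfl, fun _ => le_rfl⟩
  | arr _ _ ih₁ ih₂ =>
    simp only [Ty.mono, Ty.numArrows]
    exact ⟨fun ⟨hB₁, hB₂⟩ => by have := ih₁.2 hB₁; have := ih₂.1 hB₂; omega,
      fun ⟨hA₁, hA₂⟩ => by have := ih₁.1 hA₁; have := ih₂.2 hA₂; omega⟩
  | @allL _ _ a A τ _ _ _ ih =>
    exact ⟨fun hB => (A.numArrows_le_subst τ a).trans (ih.1 hB), fun hA => hA.elim⟩
  | allR _ ih => exact ⟨fun hB => hB.elim, ih.2⟩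

theorem not_occursInArrow_of_numArrows_le {τ B : Ty} (h : B.numArrows ≤ τ.numArrows) :
    ¬ OccursInArrow τ B := by
  rintro ⟨B₁, B₂, harr, hτ⟩
  have hB := harr.numArrows_le
  have hτB := hτ.imp Subterm.numArrows_le Subterm.numArrows_le
  simp only [Ty.numArrows] at hB
  omega

/-- Occurrence lemma: (i) if Ψ ⊢ A ≤ τ then τ does not occur inside an arrow in A;
    (ii) if Ψ ⊢ τ ≤ B then τ does not occur inside an arrow in B. -/
theorem occurrence (Ψ : Ctx) (τ : Ty) (hmono : τ.mono) :
    (∀ A, Sub Ψ A τ → ¬ OccursInArrow τ A) ∧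
    (∀ B, Sub Ψ τ B → ¬ OccursInArrow τ B) :=
  ⟨fun _ h => not_occursInArrow_of_numArrows_le (h.numArrows_le.1 hmono),
    fun _ h => not_occursInArrow_of_numArrows_le (h.numArrows_le.2 hmono)⟩

end DK
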